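/- Suppose the equation x(k+1) = A(k)x(k) has an exponential dichotomy on the interval [1,∞) with projection P(k). Then this exponential dichotomy can be extended to ℤ₊ = [0,∞) with P(k) unchanged for k ≥ 1 (i.e. there exists a projection P(0) such that the family {P(k)}_{k≥0}, agreeing with the given P(k) for k ≥ 1, is a projection with respect to which the equation has an exponential dichotomy on ℤ₊) if and only if there exists a splitting U ⊕ V = ℝⁿ such that A(0)(U) ⊆ R(P(1)), A(0)(V) = N(P(1)), and A(0) is one-to-one on V. -/

import Mathlib

noncomputable section

open scoped BigOperators

/-- ℝⁿ as a Euclidean space. -/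
abbrev Euc (n : ℕ) := EuclideanSpace ℝ (Fin n)

/-- The transition matrix `Φ(k,m) = A(k-1) ⋯ A(m)`, with `Φ(m,m) = 1`
(and `Φ(k,m) = 1` when `k ≤ m`). -/
def Phi {n : ℕ} (A : ℤ → (Euc n →L[ℝ] Euc n)) (k m : ℤ) : Euc n →L[ℝ] Euc n :=
  (((List.range (k - m).toNat).map fun i => A (m + i)).reverse).prod

/-- `J` is an interval of integers. -/
def IsIntInterval (J : Set ℤ) : Prop :=
  ∀ ⦃a b c : ℤ⦄, a ∈ J → b ∈ J → a ≤ c → c ≤ b → c ∈ J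

/-- The equation `x(k+1) = A(k) x(k)` has an exponential dichotomy on `J` with
projection family `P`, constant `K` and exponent `α`. -/
structure ExpDichotomyOn {n : ℕ} (A : ℤ → (Euc n →L[ℝ] Euc n)) (J : Set ℤ)
    (P : ℤ → (Euc n →L[ℝ] Euc n)) (K α : ℝ) : Prop where
  one_le_K : 1 ≤ K
  alpha_pos : 0 < α
  proj : ∀ k ∈ J, P k ∘L P k = P k
  rank_const : ∀ k ∈ J, ∀ m ∈ J,
    Module.finrank ℝ (LinearMap.range (P k : Euc n →ₗ[ℝ] Euc n)) = Module.finrank ℝ (LinearMap.range (P m : Euc n →ₗ[ℝ] Euc n))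
  invariance : ∀ m ∈ J, ∀ k ∈ J, m ≤ k → Phi A k m ∘L P m = P k ∘L Phi A k m
  forward : ∀ m ∈ J, ∀ k ∈ J, m ≤ k →
    ‖Phi A k m ∘L P m‖ ≤ K * Real.exp (-α * ((k : ℝ) - (m : ℝ)))
  bijOn : ∀ k : ℤ, k ∈ J → k + 1 ∈ J →
    Set.BijOn (A k) (LinearMap.ker (P k : Euc n →ₗ[ℝ] Euc n) : Set (Euc n)) (LinearMap.ker (P (k + 1) : Euc n →ₗ[ℝ] Euc n) : Set (Euc n))
  backward : ∃ Ψ : ℤ → ℤ → (Euc n →L[ℝ] Euc n), ∀ m ∈ J, ∀ k ∈ J, m ≤ k →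
    (∀ x ∈ LinearMap.ker (P m : Euc n →ₗ[ℝ] Euc n), Ψ m k (Phi A k m x) = x) ∧
    (∀ x ∈ LinearMap.ker (P k : Euc n →ₗ[ℝ] Euc n), Ψ m k x ∈ LinearMap.ker (P m : Euc n →ₗ[ℝ] Euc n) ∧ Phi A k m (Ψ m k x) = x) ∧
    ‖Ψ m k ∘L (1 - P k)‖ ≤ K * Real.exp (-α * ((k : ℝ) - (m : ℝ)))

/-! Only the projection at `0` is new. On `[1, ∞)` everything is inherited, and a pair `(0, k)`
reduces to `(1, k)` through `Φ(k, 0) = Φ(k, 1) A(0)`: the forward estimate picks up the factor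
`e^α ‖A(0)‖`, the backward one the factor `e^α ‖S‖`, where `S` inverts `A(0)` from `N(P(1))` back
to `N(P(0))`. So the dichotomy extends iff some projection `P(0)` satisfies
`A(0) P(0) = P(1) A(0)` with `A(0) : N(P(0)) → N(P(1))` bijective, and these projections are
exactly the projections onto `U` along `V` for the splittings `U ⊕ V` of the statement. -/

open Function LinearMap

section Transition

variable {n : ℕ} (A : ℤ → (Euc n →L[ℝ] Euc n))

/-- `Phi` casts the whole index list `List.range _` to `List ℤ` (through the list monad);
this form casts each index instead. -/
lemma Phi_eq_prod (k m : ℤ) :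
    Phi A k m = ((List.range (k - m).toNat).map fun i : ℕ => A (m + i)).reverse.prod := by
  simp only [Phi, bind_pure_comp, List.map_eq_map, List.map_map]
  rfl

lemma Phi_self (m : ℤ) : Phi A m m = 1 := by
  simp [Phi_eq_prod]

lemma Phi_eq_comp_of_lt {k m : ℤ} (h : m < k) : Phi A k m = Phi A k (m + 1) ∘L A m := by
  have hlen : (k - m).toNat = (k - (m + 1)).toNat + 1 := by omega
  rw [Phi_eq_prod, Phi_eq_prod, hlen, List.range_succ_eq_map]
  simp only [List.map_cons, List.map_map, List.reverse_cons, List.prod_append,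
    List.prod_singleton, ContinuousLinearMap.mul_def, Nat.cast_zero, add_zero]
  congr 4
  ext i : 1
  simp [add_assoc, add_comm (1 : ℤ)]

lemma Phi_succ_self (m : ℤ) : Phi A (m + 1) m = A m := by
  rw [Phi_eq_comp_of_lt A (lt_add_one m), Phi_self]
  rfl

end Transition

section LinearAlgebra

variable {K V W : Type*} [DivisionRing K] [AddCommGroup V] [Module K V]
  [AddCommGroup W] [Module K W]

lemma comp_eq_comp_of_map_range_le_of_map_ker_le {Q : V →ₗ[K] V} {P : W →ₗ[K] W}
    {f : V →ₗ[K] W} (hQ : IsIdempotentElem Q) (hP : IsIdempotentElem P)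
    (hrange : (range Q).map f ≤ range P) (hker : (ker Q).map f ≤ ker P) :
    f ∘ₗ Q = P ∘ₗ f :=
  calc f ∘ₗ Q = P ∘ₗ (f ∘ₗ Q) := ((hP.comp_eq_right_iff _).2 (by rwa [range_comp])).symm
    _ = (P ∘ₗ f) ∘ₗ Q := rfl
    _ = P ∘ₗ f :=
      (hQ.comp_eq_left_iff _).2 (by rwa [ker_comp, ← Submodule.map_le_iff_le_comap])

lemma exists_isCompl_map_iff_exists_isIdempotentElem {P : W →ₗ[K] W} {f : V →ₗ[K] W}
    (hP : IsIdempotentElem P) :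
    (∃ U U' : Submodule K V, IsCompl U U' ∧ U.map f ≤ range P ∧ U'.map f = ker P ∧
      Set.InjOn f U') ↔
    ∃ Q : V →ₗ[K] V,
      IsIdempotentElem Q ∧ f ∘ₗ Q = P ∘ₗ f ∧ Set.BijOn f (ker Q) (ker P) := by
  constructor
  · rintro ⟨U, U', hUU', hU, hU', hinj⟩
    have hbij : Set.BijOn f U' (ker P) := by
      rw [← hU', Submodule.map_coe]
      exact hinj.bijOn_image
    refine ⟨U.projection U' hUU', Submodule.isIdempotentElem_projection hUU', ?_, ?_⟩
    · refine comp_eq_comp_of_map_range_le_of_map_ker_le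
        (Submodule.isIdempotentElem_projection hUU') hP ?_ ?_
      · rwa [Submodule.range_projection]
      · rw [Submodule.ker_projection, hU']
    · rwa [Submodule.ker_projection]
  · rintro ⟨Q, hQ, hcomm, hbij⟩
    refine ⟨range Q, ker Q, hQ.isCompl, ?_, ?_, hbij.injOn⟩
    · rw [← range_comp, hcomm]
      exact range_comp_le_range f P
    · exact SetLike.coe_injective (by rw [Submodule.map_coe, hbij.image_eq])

lemma finrank_eq_of_bijOn {f : V →ₗ[K] W} {p : Submodule K V} {q : Submodule K W}
    (h : Set.BijOn f p q) : Module.finrank K p = Module.finrank K q :=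
  (LinearEquiv.ofBijective (f.restrict h.mapsTo) h.bijective).finrank_eq

lemma finrank_range_eq_of_bijOn_ker [FiniteDimensional K V] {Q P f : V →ₗ[K] V}
    (h : Set.BijOn f (ker Q) (ker P)) :
    Module.finrank K (range Q) = Module.finrank K (range P) := by
  have hQ := Q.finrank_range_add_finrank_ker
  have hP := P.finrank_range_add_finrank_ker
  have := finrank_eq_of_bijOn h
  omega

end LinearAlgebra

lemma Set.BijOn.exists_continuousLinearMap_invOn {𝕜 E F : Type*} [NontriviallyNormedField 𝕜]
    [CompleteSpace 𝕜] [NormedAddCommGroup E] [NormedSpace 𝕜 E] [NormedAddCommGroup F]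
    [NormedSpace 𝕜 F] [FiniteDimensional 𝕜 F] {f : E →ₗ[𝕜] F} {p : Submodule 𝕜 E}
    {q : Submodule 𝕜 F} (h : Set.BijOn f p q) :
    ∃ g : F →L[𝕜] E, Set.InvOn g f p q ∧ Set.MapsTo g q p := by
  obtain ⟨g, hg⟩ := (f ∘ₗ p.subtype).exists_leftInverse_of_injective
    (ker_eq_bot.2 h.injOn.injective)
  let g' : F →L[𝕜] E := (p.subtype ∘ₗ g).toContinuousLinearMap
  have hleft : Set.LeftInvOn g' f p := fun x hx =>
    congrArg Subtype.val (LinearMap.congr_fun hg ⟨x, hx⟩)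
  refine ⟨g', ⟨hleft, ?_⟩, fun y _ => (g y).2⟩
  intro y hy
  obtain ⟨x, hx, rfl⟩ := h.surjOn hy
  rw [hleft hx]

lemma Real.exp_neg_mul_sub_succ (α : ℝ) (k m : ℤ) :
    Real.exp (-α * ((k : ℝ) - ((m + 1 : ℤ) : ℝ))) =
      Real.exp α * Real.exp (-α * ((k : ℝ) - (m : ℝ))) := by
  rw [← Real.exp_add]
  push_cast
  ring_nf

lemma le_mul_exp_of_le_mul_exp_succ {x c K K' α : ℝ} {k m : ℤ}
    (hx : x ≤ K * Real.exp (-α * ((k : ℝ) - ((m + 1 : ℤ) : ℝ))) * c)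
    (hK' : K * Real.exp α * c ≤ K') :
    x ≤ K' * Real.exp (-α * ((k : ℝ) - (m : ℝ))) :=
  calc x ≤ K * Real.exp (-α * ((k : ℝ) - ((m + 1 : ℤ) : ℝ))) * c := hx
    _ = K * Real.exp α * c * Real.exp (-α * ((k : ℝ) - (m : ℝ))) := by
      rw [Real.exp_neg_mul_sub_succ]; ring
    _ ≤ K' * Real.exp (-α * ((k : ℝ) - (m : ℝ))) :=
      mul_le_mul_of_nonneg_right hK' (Real.exp_pos _).le

namespace ExpDichotomyOn

variable {n : ℕ} {A P : ℤ → (Euc n →L[ℝ] Euc n)} {K α : ℝ} {m : ℤ}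
  {Q₀ : Euc n →L[ℝ] Euc n}

lemma isIdempotentElem {J : Set ℤ} (h : ExpDichotomyOn A J P K α) {k : ℤ} (hk : k ∈ J) :
    IsIdempotentElem (P k : Euc n →ₗ[ℝ] Euc n) :=
  ContinuousLinearMap.IsIdempotentElem.toLinearMap (h.proj k hk)

lemma proj_update (hED : ExpDichotomyOn A {k | m + 1 ≤ k} P K α)
    (hQ₀ : IsIdempotentElem Q₀) :
    ∀ k, m ≤ k → update P m Q₀ k ∘L update P m Q₀ k = update P m Q₀ k := by
  intro k hk
  obtain rfl | hk := eq_or_lt_of_le hk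
  · rw [update_self]
    exact hQ₀
  · rw [update_of_ne hk.ne']
    exact hED.proj k hk

lemma rank_update (hED : ExpDichotomyOn A {k | m + 1 ≤ k} P K α)
    (hbij : Set.BijOn (A m) (ker (Q₀ : Euc n →ₗ[ℝ] Euc n))
      (ker (P (m + 1) : Euc n →ₗ[ℝ] Euc n)))
    {k : ℤ} (hk : m ≤ k) :
    Module.finrank ℝ (range (update P m Q₀ k : Euc n →ₗ[ℝ] Euc n)) =
      Module.finrank ℝ (range (P (m + 1) : Euc n →ₗ[ℝ] Euc n)) := by
  obtain rfl | hk := eq_or_lt_of_le hk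
  · rw [update_self]
    exact finrank_range_eq_of_bijOn_ker hbij
  · rw [update_of_ne hk.ne']
    exact hED.rank_const k hk (m + 1) (le_refl (m + 1))

lemma invariance_update (hED : ExpDichotomyOn A {k | m + 1 ≤ k} P K α)
    (hcomm : A m ∘L Q₀ = P (m + 1) ∘L A m) :
    ∀ i, m ≤ i → ∀ k, m ≤ k → i ≤ k →
      Phi A k i ∘L update P m Q₀ i = update P m Q₀ k ∘L Phi A k i := by
  intro i hi k hk hik
  obtain rfl | hi := eq_or_lt_of_le hi
  · obtain rfl | hk := eq_or_lt_of_le hk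
    · simp [Phi_self, ContinuousLinearMap.one_def]
    · rw [update_self, update_of_ne hk.ne', Phi_eq_comp_of_lt A hk,
        ContinuousLinearMap.comp_assoc, hcomm, ← ContinuousLinearMap.comp_assoc,
        hED.invariance (m + 1) (le_refl (m + 1)) k hk hk, ContinuousLinearMap.comp_assoc]
  · rw [update_of_ne hi.ne', update_of_ne (hi.trans_le hik).ne']
    exact hED.invariance i hi k (hi.trans_le hik) hik

lemma forward_update {K' : ℝ} (hED : ExpDichotomyOn A {k | m + 1 ≤ k} P K α)
    (hcomm : A m ∘L Q₀ = P (m + 1) ∘L A m) (hK : K ≤ K') (hQ₀K : ‖Q₀‖ ≤ K')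
    (hAK : K * Real.exp α * ‖A m‖ ≤ K') :
    ∀ i, m ≤ i → ∀ k, m ≤ k → i ≤ k →
      ‖Phi A k i ∘L update P m Q₀ i‖ ≤ K' * Real.exp (-α * ((k : ℝ) - (i : ℝ))) := by
  intro i hi k hk hik
  obtain rfl | hi := eq_or_lt_of_le hi
  · obtain rfl | hk := eq_or_lt_of_le hk
    · simpa [Phi_self, ContinuousLinearMap.one_def] using hQ₀K
    · have hfactor :
          Phi A k m ∘L update P m Q₀ m = (Phi A k (m + 1) ∘L P (m + 1)) ∘L A m := by
        rw [update_self, Phi_eq_comp_of_lt A hk, ContinuousLinearMap.comp_assoc, hcomm,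
          ContinuousLinearMap.comp_assoc]
      rw [hfactor]
      refine le_mul_exp_of_le_mul_exp_succ ?_ hAK
      exact (ContinuousLinearMap.opNorm_comp_le _ _).trans <| mul_le_mul_of_nonneg_right
        (hED.forward (m + 1) (le_refl (m + 1)) k hk hk) (norm_nonneg _)
  · rw [update_of_ne hi.ne']
    exact (hED.forward i hi k (hi.trans_le hik) hik).trans <|
      mul_le_mul_of_nonneg_right hK (Real.exp_pos _).le

lemma bijOn_update (hED : ExpDichotomyOn A {k | m + 1 ≤ k} P K α)
    (hbij : Set.BijOn (A m) (ker (Q₀ : Euc n →ₗ[ℝ] Euc n))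
      (ker (P (m + 1) : Euc n →ₗ[ℝ] Euc n))) :
    ∀ k, m ≤ k → m ≤ k + 1 →
      Set.BijOn (A k) (ker (update P m Q₀ k : Euc n →ₗ[ℝ] Euc n))
        (ker (update P m Q₀ (k + 1) : Euc n →ₗ[ℝ] Euc n)) := by
  intro k hk _
  obtain rfl | hk := eq_or_lt_of_le hk
  · rwa [update_self, update_of_ne (lt_add_one m).ne']
  · rw [update_of_ne hk.ne', update_of_ne (hk.trans (lt_add_one k)).ne']
    exact hED.bijOn k hk (hk.trans (lt_add_one k))

lemma backward_update_of_lt {K' : ℝ} {S Ψ : Euc n →L[ℝ] Euc n} {k : ℤ} (hk : m < k)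
    (hbij : Set.BijOn (A m) (ker (Q₀ : Euc n →ₗ[ℝ] Euc n))
      (ker (P (m + 1) : Euc n →ₗ[ℝ] Euc n)))
    (hS : Set.InvOn S (A m) (ker (Q₀ : Euc n →ₗ[ℝ] Euc n))
      (ker (P (m + 1) : Euc n →ₗ[ℝ] Euc n)))
    (hSmaps : Set.MapsTo S (ker (P (m + 1) : Euc n →ₗ[ℝ] Euc n))
      (ker (Q₀ : Euc n →ₗ[ℝ] Euc n)))
    (hSK : K * Real.exp α * ‖S‖ ≤ K')
    (hΨ : (∀ x ∈ ker (P (m + 1) : Euc n →ₗ[ℝ] Euc n), Ψ (Phi A k (m + 1) x) = x) ∧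
      (∀ x ∈ ker (P k : Euc n →ₗ[ℝ] Euc n),
        Ψ x ∈ ker (P (m + 1) : Euc n →ₗ[ℝ] Euc n) ∧ Phi A k (m + 1) (Ψ x) = x) ∧
      ‖Ψ ∘L (1 - P k)‖ ≤ K * Real.exp (-α * ((k : ℝ) - ((m + 1 : ℤ) : ℝ)))) :
    (∀ x ∈ ker (Q₀ : Euc n →ₗ[ℝ] Euc n), (S ∘L Ψ) (Phi A k m x) = x) ∧
      (∀ x ∈ ker (P k : Euc n →ₗ[ℝ] Euc n),
        (S ∘L Ψ) x ∈ ker (Q₀ : Euc n →ₗ[ℝ] Euc n) ∧ Phi A k m ((S ∘L Ψ) x) = x) ∧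
      ‖(S ∘L Ψ) ∘L (1 - P k)‖ ≤ K' * Real.exp (-α * ((k : ℝ) - (m : ℝ))) := by
  obtain ⟨hleft, hright, hnorm⟩ := hΨ
  refine ⟨fun x hx => ?_, fun x hx => ?_, ?_⟩
  · rw [Phi_eq_comp_of_lt A hk, ContinuousLinearMap.comp_apply, ContinuousLinearMap.comp_apply,
      hleft _ (hbij.mapsTo hx), hS.1 hx]
  · obtain ⟨hΨx, hΦΨx⟩ := hright x hx
    refine ⟨hSmaps hΨx, ?_⟩
    rw [Phi_eq_comp_of_lt A hk, ContinuousLinearMap.comp_apply, ContinuousLinearMap.comp_apply,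
      hS.2 hΨx, hΦΨx]
  · refine le_mul_exp_of_le_mul_exp_succ ?_ hSK
    rw [ContinuousLinearMap.comp_assoc, mul_comm _ ‖S‖]
    exact (ContinuousLinearMap.opNorm_comp_le _ _).trans <|
      mul_le_mul_of_nonneg_left hnorm (norm_nonneg _)

lemma backward_update {K' : ℝ} {S : Euc n →L[ℝ] Euc n}
    (hED : ExpDichotomyOn A {k | m + 1 ≤ k} P K α)
    (hbij : Set.BijOn (A m) (ker (Q₀ : Euc n →ₗ[ℝ] Euc n))
      (ker (P (m + 1) : Euc n →ₗ[ℝ] Euc n)))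
    (hS : Set.InvOn S (A m) (ker (Q₀ : Euc n →ₗ[ℝ] Euc n))
      (ker (P (m + 1) : Euc n →ₗ[ℝ] Euc n)))
    (hSmaps : Set.MapsTo S (ker (P (m + 1) : Euc n →ₗ[ℝ] Euc n))
      (ker (Q₀ : Euc n →ₗ[ℝ] Euc n)))
    (hK : K ≤ K') (hQ₀K : ‖1 - Q₀‖ ≤ K') (hSK : K * Real.exp α * ‖S‖ ≤ K') :
    ∃ Ψ : ℤ → ℤ → (Euc n →L[ℝ] Euc n), ∀ i, m ≤ i → ∀ k, m ≤ k → i ≤ k →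
      (∀ x ∈ ker (update P m Q₀ i : Euc n →ₗ[ℝ] Euc n), Ψ i k (Phi A k i x) = x) ∧
      (∀ x ∈ ker (update P m Q₀ k : Euc n →ₗ[ℝ] Euc n),
        Ψ i k x ∈ ker (update P m Q₀ i : Euc n →ₗ[ℝ] Euc n) ∧ Phi A k i (Ψ i k x) = x) ∧
      ‖Ψ i k ∘L (1 - update P m Q₀ k)‖ ≤ K' * Real.exp (-α * ((k : ℝ) - (i : ℝ))) := by
  obtain ⟨Ψ, hΨ⟩ := hED.backward
  refine ⟨fun i k => if i = m then (if k = m then 1 else S ∘L Ψ (m + 1) k) else Ψ i k, ?_⟩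
  intro i hi k hk hik
  obtain rfl | hi := eq_or_lt_of_le hi
  · obtain rfl | hk := eq_or_lt_of_le hk
    · simpa [Phi_self, ContinuousLinearMap.one_def] using hQ₀K
    · simp only [if_neg hk.ne', update_self, update_of_ne hk.ne']
      exact backward_update_of_lt hk hbij hS hSmaps hSK (hΨ (m + 1) (le_refl (m + 1)) k hk hk)
  · simp only [if_neg hi.ne', update_of_ne hi.ne', update_of_ne (hi.trans_le hik).ne']
    obtain ⟨hleft, hright, hnorm⟩ := hΨ i hi k (hi.trans_le hik) hik
    exact ⟨hleft, hright, hnorm.trans (mul_le_mul_of_nonneg_right hK (Real.exp_pos _).le)⟩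

theorem exists_update (hED : ExpDichotomyOn A {k | m + 1 ≤ k} P K α)
    (hQ₀ : IsIdempotentElem Q₀) (hcomm : A m ∘L Q₀ = P (m + 1) ∘L A m)
    (hbij : Set.BijOn (A m) (ker (Q₀ : Euc n →ₗ[ℝ] Euc n))
      (ker (P (m + 1) : Euc n →ₗ[ℝ] Euc n))) :
    ∃ K', ExpDichotomyOn A {k | m ≤ k} (update P m Q₀) K' α := by
  obtain ⟨S, hS, hSmaps⟩ :=
    Set.BijOn.exists_continuousLinearMap_invOn (f := (A m : Euc n →ₗ[ℝ] Euc n)) hbij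
  have hK_nonneg : 0 ≤ K := zero_le_one.trans hED.one_le_K
  have hA_nonneg : 0 ≤ K * Real.exp α * ‖A m‖ := by positivity
  have hS_nonneg : 0 ≤ K * Real.exp α * ‖S‖ := by positivity
  have hQ₀_nonneg := norm_nonneg Q₀
  have h1Q₀_nonneg := norm_nonneg (1 - Q₀)
  set K' := K + K * Real.exp α * ‖A m‖ + K * Real.exp α * ‖S‖ + ‖Q₀‖ + ‖1 - Q₀‖
  refine ⟨K', ⟨by linarith [hED.one_le_K], hED.alpha_pos, hED.proj_update hQ₀,
    fun k hk j hj => by rw [hED.rank_update hbij hk, hED.rank_update hbij hj],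
    hED.invariance_update hcomm,
    hED.forward_update hcomm (by linarith) (by linarith) (by linarith), hED.bijOn_update hbij,
    hED.backward_update hbij hS hSmaps (by linarith) (by linarith) (by linarith)⟩⟩

theorem exists_extension_iff (hED : ExpDichotomyOn A {k | m + 1 ≤ k} P K α) :
    (∃ Q : ℤ → (Euc n →L[ℝ] Euc n), (∀ k, m + 1 ≤ k → Q k = P k) ∧
      ∃ K' α' : ℝ, ExpDichotomyOn A {k | m ≤ k} Q K' α') ↔
    ∃ Q₀ : Euc n →ₗ[ℝ] Euc n, IsIdempotentElem Q₀ ∧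
      (A m : Euc n →ₗ[ℝ] Euc n) ∘ₗ Q₀ = (P (m + 1) : Euc n →ₗ[ℝ] Euc n) ∘ₗ A m ∧
      Set.BijOn (A m) (ker Q₀) (ker (P (m + 1) : Euc n →ₗ[ℝ] Euc n)) := by
  constructor
  · rintro ⟨Q, hQP, K', α', hQ⟩
    have hm1 : m + 1 ∈ {k | m ≤ k} := (lt_add_one m).le
    rw [← hQP (m + 1) le_rfl]
    refine ⟨Q m, hQ.isIdempotentElem (le_refl m), ?_, hQ.bijOn m (le_refl m) hm1⟩
    have hinv := congrArg ContinuousLinearMap.toLinearMap (hQ.invariance m (le_refl m) _ hm1 hm1)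
    rwa [Phi_succ_self, ContinuousLinearMap.toLinearMap_comp,
      ContinuousLinearMap.toLinearMap_comp] at hinv
  · rintro ⟨Q₀, hQ₀, hcomm, hbij⟩
    let Q₀' : Euc n →L[ℝ] Euc n := LinearMap.toContinuousLinearMap Q₀
    have hQ₀' : (Q₀' : Euc n →ₗ[ℝ] Euc n) = Q₀ := LinearMap.coe_toContinuousLinearMap Q₀
    obtain ⟨K', hK'⟩ := hED.exists_update (Q₀ := Q₀')
      (ContinuousLinearMap.isIdempotentElem_toLinearMap_iff.1 (hQ₀'.symm ▸ hQ₀))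
      (ContinuousLinearMap.coe_injective (by rw [ContinuousLinearMap.toLinearMap_comp,
        ContinuousLinearMap.toLinearMap_comp, hQ₀', hcomm]))
      (hQ₀'.symm ▸ hbij)
    exact ⟨update P m Q₀', fun k hk => update_of_ne (by omega) _ _, K', α, hK'⟩

end ExpDichotomyOn

/-- an exponential dichotomy on `[1, ∞)` with projection `P` extends to
`ℤ₊` with `P(k)` unchanged for `k ≥ 1` if and only if there is a splitting
`U ⊕ V = ℝⁿ` with `A(0)(U) ⊆ R(P(1))`, `A(0)(V) = N(P(1))` and `A(0)` one-to-one
on `V`. -/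
theorem statement10 {n : ℕ} (A P : ℤ → (Euc n →L[ℝ] Euc n)) (K α : ℝ)
    (hED : ExpDichotomyOn A {k : ℤ | 1 ≤ k} P K α) :
    (∃ Q : ℤ → (Euc n →L[ℝ] Euc n), (∀ k : ℤ, 1 ≤ k → Q k = P k) ∧
      ∃ K' α' : ℝ, ExpDichotomyOn A {k : ℤ | 0 ≤ k} Q K' α') ↔
    (∃ U V : Submodule ℝ (Euc n), IsCompl U V ∧
      U.map (A 0 : Euc n →ₗ[ℝ] Euc n) ≤ LinearMap.range (P 1 : Euc n →ₗ[ℝ] Euc n) ∧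
      V.map (A 0 : Euc n →ₗ[ℝ] Euc n) = LinearMap.ker (P 1 : Euc n →ₗ[ℝ] Euc n) ∧
      Set.InjOn (A 0) (V : Set (Euc n))) :=
  (ExpDichotomyOn.exists_extension_iff (m := 0) hED).trans
    (exists_isCompl_map_iff_exists_isIdempotentElem (hED.isIdempotentElem (le_refl (1 : ℤ)))).symm
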